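/- (Performance core of Theorem 1.) Let n_ψ, n_e, n_z, n_f ∈ ℕ, let P be an n_ψ×n_ψ real symmetric positive definite matrix, and let γ > 0, σ > 0. Define the block-diagonal matrices R₁ = diag(P, I_{n_e}, γ²·I_{n_f}) of size (n_ψ+n_e+n_f) and R₂ = diag(P, σ·I_{n_e}, I_{n_z}) of size (n_ψ+n_e+n_z). Let (H_k)_{k∈ℕ} be a sequence of (n_ψ+n_e+n_z)×(n_ψ+n_e+n_f) real matrices such that R₁ − H_kᵀ R₂ H_k is positive semidefinite for every k. Let ψ : ℕ → ℝ^{n_ψ}, e : ℕ → ℝ^{n_e}, f : ℕ → ℝ^{n_f}, η : ℕ → ℝ^{n_e}, z : ℕ → ℝ^{n_z} be sequences with ψ(0) = 0 satisfying, for every k, the concatenated identity (ψ(k+1), η(k), z(k)) = H_k · (ψ(k), e(k), f(k)) and the event-trigger condition ‖e(k)‖₂² ≤ σ·‖η(k)‖₂². Then for every n, ∑_{k=0}^{n−1} ‖z(k)‖₂² ≤ γ² · ∑_{k=0}^{n−1} ‖f(k)‖₂². -/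

import Mathlib

/-!
The quadratic form `V ψ = ψᵀ P ψ` is a storage function: testing the matrix inequality
`R₁ ⪰ H_kᵀ R₂ H_k` on `(ψ k, e k, f k)` gives
`V (ψ (k+1)) + σ‖η k‖² + ‖z k‖² ≤ V (ψ k) + ‖e k‖² + γ²‖f k‖²`, and the trigger condition
cancels the `e`/`η` terms. Summing the resulting dissipation inequalities telescopes, and
`V (ψ 0) = 0 ≤ V (ψ n)` leaves the ℓ₂-gain bound.
-/

open Matrix

lemma Finset.sum_range_add_le_sum_range_add {α : Type*} [AddCommMonoid α] [PartialOrder α]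
    [IsOrderedAddMonoid α] {a b V : ℕ → α} (h : ∀ k, a k + V (k + 1) ≤ b k + V k) (n : ℕ) :
    ∑ k ∈ Finset.range n, a k + V n ≤ ∑ k ∈ Finset.range n, b k + V 0 := by
  induction n with
  | zero => simp
  | succ n ih =>
    calc ∑ k ∈ Finset.range (n + 1), a k + V (n + 1)
        = ∑ k ∈ Finset.range n, a k + (a n + V (n + 1)) := by
          rw [Finset.sum_range_succ, add_assoc]
      _ ≤ ∑ k ∈ Finset.range n, a k + (b n + V n) := add_le_add_right (h n) _
      _ = (∑ k ∈ Finset.range n, a k + V n) + b n := by rw [add_comm (b n), add_assoc]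
      _ ≤ (∑ k ∈ Finset.range n, b k + V 0) + b n := add_le_add_left ih _
      _ = ∑ k ∈ Finset.range (n + 1), b k + V 0 := by
          rw [Finset.sum_range_succ, add_right_comm]

namespace Matrix

variable {ι κ R : Type*} [Fintype ι] [Fintype κ] [CommSemiring R]

lemma sumElim_dotProduct_fromBlocks_diag_mulVec (A : Matrix ι ι R) (D : Matrix κ κ R)
    (a : ι → R) (b : κ → R) :
    Sum.elim a b ⬝ᵥ (fromBlocks A 0 0 D *ᵥ Sum.elim a b) = a ⬝ᵥ (A *ᵥ a) + b ⬝ᵥ (D *ᵥ b) := by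
  simp [fromBlocks_mulVec, sumElim_dotProduct_sumElim]

lemma dotProduct_smul_one_mulVec [DecidableEq ι] (s : R) (b : ι → R) :
    b ⬝ᵥ ((s • 1 : Matrix ι ι R) *ᵥ b) = s * (b ⬝ᵥ b) := by
  rw [smul_mulVec, one_mulVec, dotProduct_smul, smul_eq_mul]

lemma PosSemidef.dotProduct_mulVec_le_of_sub_transpose_mul_mul {R₁ : Matrix ι ι ℝ}
    {R₂ : Matrix κ κ ℝ} {H : Matrix κ ι ℝ} (h : (R₁ - Hᵀ * R₂ * H).PosSemidef) (x : ι → ℝ) :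
    (H *ᵥ x) ⬝ᵥ (R₂ *ᵥ (H *ᵥ x)) ≤ x ⬝ᵥ (R₁ *ᵥ x) := by
  have hx := h.dotProduct_mulVec_nonneg x
  rw [star_trivial, sub_mulVec, dotProduct_sub, ← mulVec_mulVec, ← mulVec_mulVec,
    dotProduct_mulVec x Hᵀ, vecMul_transpose, sub_nonneg] at hx
  exact hx

end Matrix

theorem stmt_8_general {nψ ne nz nf : ℕ}
    (P : Matrix (Fin nψ) (Fin nψ) ℝ) (hP : P.PosDef)
    (γ σ : ℝ)
    (H : ℕ → Matrix (Fin nψ ⊕ (Fin ne ⊕ Fin nz)) (Fin nψ ⊕ (Fin ne ⊕ Fin nf)) ℝ)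
    (R₁ : Matrix (Fin nψ ⊕ (Fin ne ⊕ Fin nf)) (Fin nψ ⊕ (Fin ne ⊕ Fin nf)) ℝ)
    (R₂ : Matrix (Fin nψ ⊕ (Fin ne ⊕ Fin nz)) (Fin nψ ⊕ (Fin ne ⊕ Fin nz)) ℝ)
    (hR₁ : R₁ = Matrix.fromBlocks P 0 0
      (Matrix.fromBlocks 1 0 0 (γ ^ 2 • (1 : Matrix (Fin nf) (Fin nf) ℝ))))
    (hR₂ : R₂ = Matrix.fromBlocks P 0 0
      (Matrix.fromBlocks (σ • (1 : Matrix (Fin ne) (Fin ne) ℝ)) 0 0 1))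
    (hLMI : ∀ k, (R₁ - (H k)ᵀ * R₂ * H k).PosSemidef)
    (ψ : ℕ → Fin nψ → ℝ) (e : ℕ → Fin ne → ℝ) (f : ℕ → Fin nf → ℝ)
    (η : ℕ → Fin ne → ℝ) (z : ℕ → Fin nz → ℝ)
    (hψ0 : ψ 0 = 0)
    (hdyn : ∀ k, Sum.elim (ψ (k + 1)) (Sum.elim (η k) (z k)) =
      H k *ᵥ Sum.elim (ψ k) (Sum.elim (e k) (f k)))
    (hET : ∀ k, e k ⬝ᵥ e k ≤ σ * (η k ⬝ᵥ η k)) :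
    ∀ n, ∑ k ∈ Finset.range n, z k ⬝ᵥ z k ≤
      γ ^ 2 * ∑ k ∈ Finset.range n, f k ⬝ᵥ f k := by
  intro n
  set V : ℕ → ℝ := fun k ↦ ψ k ⬝ᵥ (P *ᵥ ψ k)
  have hdissip : ∀ k, z k ⬝ᵥ z k + V (k + 1) ≤ γ ^ 2 * (f k ⬝ᵥ f k) + V k := by
    intro k
    have h := (hLMI k).dotProduct_mulVec_le_of_sub_transpose_mul_mul
      (Sum.elim (ψ k) (Sum.elim (e k) (f k)))
    rw [← hdyn k, hR₁, hR₂] at h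
    simp only [sumElim_dotProduct_fromBlocks_diag_mulVec, dotProduct_smul_one_mulVec,
      one_mulVec] at h
    linarith [hET k]
  have hV0 : V 0 = 0 := by simp [V, hψ0]
  have hVn : 0 ≤ V n := by simpa using hP.posSemidef.dotProduct_mulVec_nonneg (ψ n)
  have hsum := Finset.sum_range_add_le_sum_range_add hdissip n
  rw [hV0, ← Finset.mul_sum] at hsum
  linarith

/-- Performance core of Theorem 1: a per-step quadratic dissipation certificate
`R₁ − H_kᵀ R₂ H_k ⪰ 0`, together with the event-trigger condition
`‖e k‖₂² ≤ σ‖η k‖₂²`, yields the finite-horizon ℓ₂-gain bound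
`∑_{k<n} ‖z k‖₂² ≤ γ² ∑_{k<n} ‖f k‖₂²`. -/
theorem stmt_8 {nψ ne nz nf : ℕ}
    (P : Matrix (Fin nψ) (Fin nψ) ℝ) (hP : P.PosDef)
    (γ σ : ℝ) (hγ : 0 < γ) (hσ : 0 < σ)
    (H : ℕ → Matrix (Fin nψ ⊕ (Fin ne ⊕ Fin nz)) (Fin nψ ⊕ (Fin ne ⊕ Fin nf)) ℝ)
    (R₁ : Matrix (Fin nψ ⊕ (Fin ne ⊕ Fin nf)) (Fin nψ ⊕ (Fin ne ⊕ Fin nf)) ℝ)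
    (R₂ : Matrix (Fin nψ ⊕ (Fin ne ⊕ Fin nz)) (Fin nψ ⊕ (Fin ne ⊕ Fin nz)) ℝ)
    (hR₁ : R₁ = Matrix.fromBlocks P 0 0
      (Matrix.fromBlocks 1 0 0 (γ ^ 2 • (1 : Matrix (Fin nf) (Fin nf) ℝ))))
    (hR₂ : R₂ = Matrix.fromBlocks P 0 0
      (Matrix.fromBlocks (σ • (1 : Matrix (Fin ne) (Fin ne) ℝ)) 0 0 1))
    (hLMI : ∀ k, (R₁ - (H k)ᵀ * R₂ * H k).PosSemidef)
    (ψ : ℕ → Fin nψ → ℝ) (e : ℕ → Fin ne → ℝ) (f : ℕ → Fin nf → ℝ)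
    (η : ℕ → Fin ne → ℝ) (z : ℕ → Fin nz → ℝ)
    (hψ0 : ψ 0 = 0)
    (hdyn : ∀ k, Sum.elim (ψ (k + 1)) (Sum.elim (η k) (z k)) =
      H k *ᵥ Sum.elim (ψ k) (Sum.elim (e k) (f k)))
    (hET : ∀ k, e k ⬝ᵥ e k ≤ σ * (η k ⬝ᵥ η k)) :
    ∀ n, ∑ k ∈ Finset.range n, z k ⬝ᵥ z k ≤
      γ ^ 2 * ∑ k ∈ Finset.range n, f k ⬝ᵥ f k :=
  stmt_8_general P hP γ σ H R₁ R₂ hR₁ hR₂ hLMI ψ e f η z hψ0 hdyn hET
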